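/- For nonzero rational functions f₁, f₂ on ℂ, the absolute value of the Jacobian determinant of Log∘(f₁,f₂) is Lebesgue-integrable over ℂ. -/

import Mathlib

/-!
With `w = f₁'/f₁` and `v = f₂'/f₂` one has `|J| = |Im (w * conj v)| / 2`. Off the finitely many
zeros and poles, `w` and `v` are signed sums of `(z - r)⁻¹` over the zeros and poles, so
`Im (w * conj v)` is a finite combination of `Im ((z - a)⁻¹ * conj (z - b)⁻¹)`. Since
`(z - a)⁻¹ * conj (z - a)⁻¹` is real, this term is bounded by `|a - b| / (|z - a|² |z - b|)` and by
the symmetric expression, hence by a multiple of `ψ (z - a) + ψ (z - b)` with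
`ψ z = (|z| (1 + |z|)²)⁻¹`. In the plane `ψ` is integrable: it behaves like `|z|⁻¹` near `0` and
like `|z|⁻³` at infinity.
-/

open Complex MeasureTheory

/-- The Jacobian determinant of `Log ∘ (f₁, f₂)`. -/
noncomputable def Jac (f₁ f₂ : ℂ → ℂ) (z : ℂ) : ℂ :=
  (Complex.I / 4) *
    ((deriv f₁ z / f₁ z) * (starRingEnd ℂ) (deriv f₂ z / f₂ z)
      - (starRingEnd ℂ) (deriv f₁ z / f₁ z) * (deriv f₂ z / f₂ z))

open Metric ComplexConjugate Polynomial

theorem integrable_inv_norm_mul_one_add_norm_sq {E : Type*} [NormedAddCommGroup E]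
    [NormedSpace ℝ E] [FiniteDimensional ℝ E] [MeasurableSpace E] [BorelSpace E]
    {μ : Measure E} [μ.IsAddHaarMeasure] (hE : Module.finrank ℝ E = 2) :
    Integrable (fun x : E => (‖x‖ * (1 + ‖x‖) ^ 2)⁻¹) μ := by
  have hmeas : AEStronglyMeasurable (fun x : E => (‖x‖ * (1 + ‖x‖) ^ 2)⁻¹) μ := by fun_prop
  rw [← integrableOn_univ, ← Set.union_compl_self (ball (0 : E) 1)]
  refine IntegrableOn.union ?_ ?_
  · refine integrableOn_ball_of_norm_le_rpow (C := 1) (α := 1) (by omega) (by simp [hE])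
      (ae_of_all _ fun x => ?_) hmeas
    rw [Real.rpow_neg_one, one_mul, Real.norm_of_nonneg (by positivity)]
    rcases (norm_nonneg x).eq_or_lt with hx | hx
    · simp [← hx]
    · exact inv_anti₀ hx (le_mul_of_one_le_right hx.le (one_le_pow₀ (by simp)))
  · have htail : Integrable (fun x : E => 2 * (1 + ‖x‖) ^ (-3 : ℝ)) μ :=
      (integrable_one_add_norm (by simp [hE]; norm_num)).const_mul 2
    refine htail.integrableOn.mono' hmeas.restrict ((ae_restrict_iff' measurableSet_ball.compl).2
      (ae_of_all _ fun x hx => ?_))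
    have hx : 1 ≤ ‖x‖ := by simpa using hx
    rw [Real.norm_of_nonneg (by positivity), Real.rpow_neg (by positivity),
      show (3 : ℝ) = (3 : ℕ) by norm_num, Real.rpow_natCast, ← div_eq_mul_inv,
      le_div_iff₀ (by positivity), inv_mul_eq_div, div_le_iff₀ (by positivity)]
    nlinarith [sq_nonneg (1 + ‖x‖)]

theorem abs_im_inv_mul_conj_inv_le {u s : ℂ} (hu : u ≠ 0) (hs : s ≠ 0) :
    |(u⁻¹ * conj s⁻¹).im| ≤ ‖u - s‖ / (‖u‖ ^ 2 * ‖s‖) := by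
  have hreal : (u⁻¹ * conj u⁻¹).im = 0 := by rw [mul_conj]; simp
  have him : (u⁻¹ * conj s⁻¹).im = (u⁻¹ * conj (s⁻¹ - u⁻¹)).im := by
    rw [map_sub, mul_sub, sub_im, hreal, sub_zero]
  calc |(u⁻¹ * conj s⁻¹).im| = |(u⁻¹ * conj (s⁻¹ - u⁻¹)).im| := by rw [him]
    _ ≤ ‖u⁻¹ * conj (s⁻¹ - u⁻¹)‖ := abs_im_le_norm _
    _ = ‖u - s‖ / (‖u‖ ^ 2 * ‖s‖) := by
      rw [norm_mul, norm_conj, inv_sub_inv hs hu, norm_div, norm_mul, norm_inv]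
      field_simp

theorem le_const_mul_add_inv_mul_one_add_sq {x y d k : ℝ} (hx : 0 < x) (hy : 0 < y) (hd : 0 < d)
    (hxy : d ≤ x + y) (hk₁ : k ≤ d / (x * y ^ 2)) (hk₂ : k ≤ d / (x ^ 2 * y)) :
    k ≤ (d + 2) ^ 2 / d * ((x * (1 + x) ^ 2)⁻¹ + (y * (1 + y) ^ 2)⁻¹) := by
  wlog hle : x ≤ y generalizing x y
  · rw [add_comm (x * (1 + x) ^ 2)⁻¹]
    exact this hy hx (by linarith) (by rwa [mul_comm]) (by rwa [mul_comm]) (by linarith)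
  have hlin : d * (1 + x) ≤ (d + 2) * y := by nlinarith
  have hsq : d ^ 2 * (1 + x) ^ 2 ≤ (d + 2) ^ 2 * y ^ 2 := by
    rw [← mul_pow, ← mul_pow]; exact pow_le_pow_left₀ (by positivity) hlin 2
  calc k ≤ d / (x * y ^ 2) := hk₁
    _ ≤ (d + 2) ^ 2 / d * (x * (1 + x) ^ 2)⁻¹ := by
      rw [div_mul_eq_mul_div, ← div_eq_mul_inv, div_div,
        div_le_div_iff₀ (by positivity) (by positivity)]
      nlinarith
    _ ≤ _ := by
      gcongr
      exact le_add_of_nonneg_right (by positivity)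

theorem abs_im_mul_conj_comm (w v : ℂ) : |(w * conj v).im| = |(v * conj w).im| := by
  rw [← abs_neg, ← conj_im, map_mul, conj_conj, mul_comm]

theorem integrable_im_inv_sub_mul_conj_inv_sub (a b : ℂ) :
    Integrable (fun z : ℂ => ((z - a)⁻¹ * conj (z - b)⁻¹).im) := by
  rcases eq_or_ne a b with rfl | hab
  · simp only [mul_conj, ofReal_im]
    exact integrable_zero _ _ _
  set d := ‖a - b‖
  have hd : 0 < d := norm_pos_iff.2 (sub_ne_zero.2 hab)
  have hψ : Integrable (fun z : ℂ => (‖z‖ * (1 + ‖z‖) ^ 2)⁻¹) :=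
    integrable_inv_norm_mul_one_add_norm_sq finrank_real_complex
  refine Integrable.mono' (((hψ.comp_sub_right a).add (hψ.comp_sub_right b)).const_mul
    ((d + 2) ^ 2 / d)) (by fun_prop) ?_
  filter_upwards [Measure.ae_ne volume a, Measure.ae_ne volume b] with z hza hzb
  have hu : z - a ≠ 0 := sub_ne_zero.2 hza
  have hs : z - b ≠ 0 := sub_ne_zero.2 hzb
  have hdiff : ‖(z - a) - (z - b)‖ = d := by rw [sub_sub_sub_cancel_left, norm_sub_rev]
  have hk₁ := abs_im_inv_mul_conj_inv_le hs hu
  rw [abs_im_mul_conj_comm, norm_sub_rev, hdiff, mul_comm (‖z - b‖ ^ 2)] at hk₁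
  have hk₂ := abs_im_inv_mul_conj_inv_le hu hs
  rw [hdiff] at hk₂
  rw [Real.norm_eq_abs, Pi.add_apply]
  refine le_const_mul_add_inv_mul_one_add_sq (norm_pos_iff.2 hu) (norm_pos_iff.2 hs) hd ?_ hk₁ hk₂
  calc d = ‖(z - b) - (z - a)‖ := by rw [← hdiff, norm_sub_rev]
    _ ≤ ‖z - a‖ + ‖z - b‖ := by rw [add_comm]; exact norm_sub_le _ _

noncomputable def sumInvSub (s : Multiset ℂ) (z : ℂ) : ℂ := (s.map fun r => (z - r)⁻¹).sum

theorem integrable_im_inv_sub_mul_conj_sumInvSub (a : ℂ) (t : Multiset ℂ) :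
    Integrable (fun z => ((z - a)⁻¹ * conj (sumInvSub t z)).im) := by
  induction t using Multiset.induction_on with
  | empty => simp [sumInvSub]
  | cons b t ih =>
    simp only [sumInvSub, Multiset.map_cons, Multiset.sum_cons, map_add, mul_add, add_im] at ih ⊢
    exact (integrable_im_inv_sub_mul_conj_inv_sub a b).add ih

theorem integrable_im_sumInvSub_mul_conj_sumInvSub (s t : Multiset ℂ) :
    Integrable (fun z => (sumInvSub s z * conj (sumInvSub t z)).im) := by
  induction s using Multiset.induction_on with
  | empty => simp [sumInvSub]
  | cons a s ih =>
    simp only [sumInvSub, Multiset.map_cons, Multiset.sum_cons, add_mul, add_im] at ih ⊢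
    exact (integrable_im_inv_sub_mul_conj_sumInvSub a t).add ih

theorem logDeriv_eval_multiset_prod_X_sub_C {s : Multiset ℂ} {z : ℂ} (hz : z ∉ s) :
    logDeriv (fun w => ((s.map fun r => X - C r).prod).eval w) z = sumInvSub s z := by
  induction s using Multiset.induction_on with
  | empty => simp [sumInvSub, logDeriv_const]
  | cons a s ih =>
    rw [Multiset.mem_cons, not_or] at hz
    have ha : (X - C a).eval z ≠ 0 := by simpa [sub_eq_zero] using hz.1
    have hs : ((s.map fun r => X - C r).prod).eval z ≠ 0 := by
      simpa [eval_multiset_prod, Multiset.prod_eq_zero_iff, sub_eq_zero, eq_comm] using hz.2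
    simp only [Multiset.map_cons, Multiset.prod_cons, eval_mul]
    rw [logDeriv_mul (f := fun w => eval w (X - C a)) z ha hs (Polynomial.differentiableAt _)
      (Polynomial.differentiableAt _), ih hz.2]
    simp [sumInvSub, logDeriv_apply]

theorem logDeriv_eval_eq_sumInvSub_roots {p : ℂ[X]} {z : ℂ} (hz : p.eval z ≠ 0) :
    logDeriv (fun w => p.eval w) z = sumInvSub p.roots z := by
  have hp : p ≠ 0 := by rintro rfl; simp at hz
  have hsplit : (fun w => p.eval w)
      = fun w => p.leadingCoeff * ((p.roots.map fun r => X - C r).prod).eval w := by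
    funext w
    conv_lhs => rw [(IsAlgClosed.splits p).eq_prod_roots]
    rw [eval_mul, eval_C]
  rw [hsplit, logDeriv_const_mul z _ (leadingCoeff_ne_zero.2 hp),
    logDeriv_eval_multiset_prod_X_sub_C]
  exact fun h => hz ((mem_roots hp).1 h)

theorem logDeriv_eval_div_eval {p q : ℂ[X]} {z : ℂ} (hp : p.eval z ≠ 0) (hq : q.eval z ≠ 0) :
    logDeriv (fun w => p.eval w / q.eval w) z = sumInvSub p.roots z - sumInvSub q.roots z := by
  rw [logDeriv_div z hp hq (Polynomial.differentiableAt _) (Polynomial.differentiableAt _),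
    logDeriv_eval_eq_sumInvSub_roots hp, logDeriv_eval_eq_sumInvSub_roots hq]

theorem norm_Jac (f₁ f₂ : ℂ → ℂ) (z : ℂ) :
    ‖Jac f₁ f₂ z‖ = |(logDeriv f₁ z * conj (logDeriv f₂ z)).im| / 2 := by
  have h : Jac f₁ f₂ z = I / 4 * ((logDeriv f₁ z * conj (logDeriv f₂ z))
      - conj (logDeriv f₁ z * conj (logDeriv f₂ z))) := by
    rw [Jac, map_mul, conj_conj, logDeriv_apply, logDeriv_apply]
  rw [h, sub_conj, norm_mul, norm_mul, norm_div, norm_I, norm_real, Real.norm_eq_abs, abs_mul]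
  norm_num
  ring

theorem Polynomial.ae_eval_ne_zero {R : Type*} [CommRing R] [IsDomain R] [MeasurableSpace R]
    (μ : Measure R) [NullSingletonClass μ] {p : R[X]} (hp : p ≠ 0) : ∀ᵐ x ∂μ, p.eval x ≠ 0 :=
  (finite_setOfPred_isRoot hp).countable.ae_notMem μ

/-- the absolute value of the Jacobian determinant of `Log ∘ (f₁, f₂)` is
Lebesgue-integrable over `ℂ`. -/
theorem stmt3 (p₁ q₁ p₂ q₂ : Polynomial ℂ)
    (hp₁ : p₁ ≠ 0) (hq₁ : q₁ ≠ 0) (hp₂ : p₂ ≠ 0) (hq₂ : q₂ ≠ 0)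
    (f₁ f₂ : ℂ → ℂ)
    (hf₁ : ∀ z, f₁ z = p₁.eval z / q₁.eval z)
    (hf₂ : ∀ z, f₂ z = p₂.eval z / q₂.eval z) :
    Integrable (fun z : ℂ => ‖Jac f₁ f₂ z‖) := by
  obtain rfl : f₁ = fun z => p₁.eval z / q₁.eval z := funext hf₁
  obtain rfl : f₂ = fun z => p₂.eval z / q₂.eval z := funext hf₂
  simp_rw [norm_Jac]
  refine (Integrable.abs ?_).div_const 2
  have hpair := integrable_im_sumInvSub_mul_conj_sumInvSub
  have hsum : Integrable fun z => ((sumInvSub p₁.roots z - sumInvSub q₁.roots z)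
      * conj (sumInvSub p₂.roots z - sumInvSub q₂.roots z)).im := by
    simp only [map_sub, sub_mul, mul_sub, sub_im]
    exact ((hpair _ _).sub (hpair _ _)).sub ((hpair _ _).sub (hpair _ _))
  refine hsum.congr ?_
  filter_upwards [ae_eval_ne_zero volume hp₁, ae_eval_ne_zero volume hq₁,
    ae_eval_ne_zero volume hp₂, ae_eval_ne_zero volume hq₂] with z h₁ h₂ h₃ h₄
  rw [logDeriv_eval_div_eval h₁ h₂, logDeriv_eval_div_eval h₃ h₄]
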